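/- Let (W,S) be a Coxeter system and let I_• = [I_0, …, I_d] be a singlestep expression (each I_i finitary and I_{i+1} = I_i ∪ {s} or I_i \ {s} for some s ∈ S). The expression I_• expresses the unique (I_0,I_d)-coset p with max(p) = w_{I_0} * w_{I_1} * ⋯ * w_{I_d} (Demazure products of longest elements). Then for any path p_• = [p_0,…,p_d] subordinate to I_•, the terminus p_d satisfies p_d ≤ p in the Bruhat order on (I_0,I_d)-cosets. -/

import Mathlib

/-!
Every element of the coset `p k` lies below the Demazure product `w_{I_0} ⋆ ⋯ ⋆ w_{I_k}`, by
induction on `k`. A step removing a generator only shrinks the coset. A step adding one writes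
each element of `p (k+1)` as `y * b` with `y ∈ p k` and `b ∈ W_{I_{k+1}}`, so `b ≤ w_{I_{k+1}}`,
and `u ≤ x`, `v ≤ y` imply `u * v ≤ x ⋆ y`. Hence `min p_d ≤ max p`. As `min p_d` has no left
descents in `I_0` and no right descents in `I_d`, the lifting property keeps it below every
element of the double coset of `max p`, in particular below `min p`.

The Bruhat-order facts behind this (subword and lifting properties) come from the strong exchange
property, proved for arbitrary words by counting reflections in inversion sequences modulo 2.
-/

namespace CoxeterPaper

open CoxeterSystem

variable {B : Type*} {W : Type*} [Group W] {M : CoxeterMatrix B}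

/-- The Bruhat order on a Coxeter group: the reflexive-transitive closure of the
relation `a < a * t` for `t` a reflection with length increasing. -/
def BruhatLE (cs : CoxeterSystem M W) (x y : W) : Prop :=
  Relation.ReflTransGen
    (fun a b => (∃ t, cs.IsReflection t ∧ b = a * t) ∧ cs.length a < cs.length b) x y

/-- One step of the Demazure product with a simple reflection. -/
noncomputable def demStep (cs : CoxeterSystem M W) (x : W) (i : B) : W :=
  if cs.length x < cs.length (x * cs.simple i) then x * cs.simple i else x

/-- The Demazure product of `x` with the word `l`. -/
noncomputable def demWord (cs : CoxeterSystem M W) (x : W) (l : List B) : W :=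
  l.foldl (demStep cs) x

/-- The Demazure product (Coxeter monoid product) of two elements: fold the
Demazure action of a reduced word of `y` onto `x`. -/
noncomputable def dem (cs : CoxeterSystem M W) (x y : W) : W :=
  demWord cs x (Classical.choose (cs.exists_reduced_word y))

/-- The standard parabolic subgroup attached to a set of simple indices. -/
def parabolic (cs : CoxeterSystem M W) (I : Set B) : Subgroup W :=
  Subgroup.closure (cs.simple '' I)

/-- `I` is finitary if the parabolic subgroup `W_I` is finite. -/
def Finitary (cs : CoxeterSystem M W) (I : Set B) : Prop :=
  (parabolic cs I : Set W).Finite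

/-- The double coset `W_I w W_J` as a subset of `W`. -/
def doset (cs : CoxeterSystem M W) (I J : Set B) (w : W) : Set W :=
  {x | ∃ a ∈ parabolic cs I, ∃ b ∈ parabolic cs J, x = a * w * b}

/-- `p` is an `(I,J)`-double coset. -/
def IsDCoset (cs : CoxeterSystem M W) (I J : Set B) (p : Set W) : Prop :=
  ∃ w, p = doset cs I J w

/-- `m` is the Bruhat-minimal element of `p`. -/
def IsMinOf (cs : CoxeterSystem M W) (p : Set W) (m : W) : Prop :=
  m ∈ p ∧ ∀ x ∈ p, BruhatLE cs m x

/-- `m` is the Bruhat-maximal element of `p`. -/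
def IsMaxOf (cs : CoxeterSystem M W) (p : Set W) (m : W) : Prop :=
  m ∈ p ∧ ∀ x ∈ p, BruhatLE cs x m

/-- `[I 0, …, I d]` is a singlestep expression. -/
def IsSinglestep (I : ℕ → Set B) (d : ℕ) : Prop :=
  ∀ k < d, (∃ s, s ∉ I k ∧ I (k + 1) = insert s (I k)) ∨
    (∃ s, s ∈ I k ∧ I (k + 1) = I k \ {s})

/-- `p` is a path subordinate to the singlestep expression `[I 0, …, I d]`. -/
def IsSubPath (cs : CoxeterSystem M W) (I : ℕ → Set B) (d : ℕ) (p : ℕ → Set W) : Prop :=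
  p 0 = doset cs (I 0) (I 0) 1 ∧
  (∀ i ≤ d, IsDCoset cs (I 0) (I i) (p i)) ∧
  ∀ k < d, (I k ⊆ I (k + 1) → p k ⊆ p (k + 1)) ∧ (I (k + 1) ⊆ I k → p (k + 1) ⊆ p k)

/-- The Demazure product `w_{I_0} * w_{I_1} * ⋯ * w_{I_d}` of the longest elements
`wI 0, …, wI d`. -/
noncomputable def exprMax (cs : CoxeterSystem M W) (wI : ℕ → W) (d : ℕ) : W :=
  ((List.range d).map fun k => wI (k + 1)).foldl (dem cs) (wI 0)

end CoxeterPaper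

namespace CoxeterSystem

open List

variable {B : Type*} {W : Type*} [Group W] {M : CoxeterMatrix B}

theorem prod_map_alternatingWord_two_mul {G : Type*} [Monoid G] (f : B → G) (i i' : B)
    (m : ℕ) : ((alternatingWord i i' (2 * m)).map f).prod = (f i * f i') ^ m := by
  induction m with
  | zero => simp [alternatingWord]
  | succ m ih =>
    rw [show 2 * (m + 1) = 2 * m + 1 + 1 by ring, alternatingWord_succ', alternatingWord_succ',
      if_neg (by simp [parity_simps]), if_pos (even_two_mul m)]
    simp [ih, pow_succ', mul_assoc]

section Parity

variable (cs : CoxeterSystem M W)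

local prefix:100 "s " => cs.simple
local prefix:100 "π " => cs.wordProd
local prefix:100 "ℓ " => cs.length
local prefix:100 "lis " => cs.leftInvSeq

/-- The left inversion sequence of a braid relator repeats itself after half its length. -/
theorem count_leftInvSeq_alternatingWord [DecidableEq W] (i i' : B) (t : W) :
    ((lis (alternatingWord i i' (2 * M i i'))).count t : ZMod 2) = 0 := by
  set L := lis (alternatingWord i i' (2 * M i i'))
  have hL : L.length = 2 * M i i' := by simp [L]
  have hperiod : L.drop (M i i') = L.take (M i i') := by
    refine List.ext_getElem (by rw [length_drop, length_take, hL]; omega) fun k h₁ h₂ => ?_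
    rw [length_drop, hL] at h₁
    rw [length_take, hL] at h₂
    simp only [L, getElem_drop, getElem_take]
    rw [cs.getElem_leftInvSeq_alternatingWord i i' _ _ (by omega),
      cs.getElem_leftInvSeq_alternatingWord i i' _ _ (by omega),
      cs.prod_alternatingWord_eq_mul_pow, cs.prod_alternatingWord_eq_mul_pow,
      show (2 * (M i i' + k) + 1) / 2 = M i i' + k by omega,
      show (2 * k + 1) / 2 = k by omega, pow_add, cs.simple_mul_simple_pow', one_mul]
    simp
  rw [← List.take_append_drop (M i i') L, List.count_append, hperiod, ← two_mul,
    Nat.cast_mul, show ((2 : ℕ) : ZMod 2) = 0 from rfl, zero_mul]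

variable [DecidableEq W]

def simpleParityPerm (i : B) : Equiv.Perm (W × ZMod 2) :=
  Function.Involutive.toPerm
    (fun p => (s i * p.1 * s i, p.2 + if p.1 = s i then 1 else 0))
    (by
      rintro ⟨t, z⟩
      have hconj : s i * t * s i = s i ↔ t = s i := by
        rw [mul_assoc, mul_eq_left]
        constructor <;> intro h
        · rwa [mul_eq_one_iff_eq_inv, cs.inv_simple] at h
        · rw [h, cs.simple_mul_simple_self]
      simp only [Prod.mk.injEq, hconj, add_assoc, CharTwo.add_self_eq_zero, add_zero, and_true]
      simp [mul_assoc])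

theorem simpleParityPerm_apply (i : B) (t : W) (z : ZMod 2) :
    simpleParityPerm cs i (t, z) = (s i * t * s i, z + if t = s i then 1 else 0) :=
  rfl

theorem prod_map_simpleParityPerm_apply (ω : List B) (t : W) (z : ZMod 2) :
    (ω.map (simpleParityPerm cs)).prod (t, z) =
      (π ω * t * (π ω)⁻¹, z + ((lis ω).count (π ω * t * (π ω)⁻¹) : ZMod 2)) := by
  induction ω with
  | nil => simp
  | cons i ω ih =>
    have hconj :
        π (i :: ω) * t * (π (i :: ω))⁻¹ = MulAut.conj (s i) (π ω * t * (π ω)⁻¹) := by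
      simp [cs.wordProd_cons, mul_assoc, cs.inv_simple]
    have hlis : lis (i :: ω) = s i :: (lis ω).map (MulAut.conj (s i)) := rfl
    have hself : MulAut.conj (s i) (s i) = s i := by simp [cs.inv_simple]
    set u := π ω * t * (π ω)⁻¹
    have hcount : (lis (i :: ω)).count (MulAut.conj (s i) u) =
        (lis ω).count u + if u = s i then 1 else 0 := by
      rw [hlis, count_cons, count_map_of_injective _ _ (MulAut.conj (s i)).injective]
      simp only [beq_iff_eq, eq_comm (a := s i), (MulAut.conj (s i)).injective.eq_iff' hself]
    rw [map_cons, prod_cons, Equiv.Perm.mul_apply, ih, hconj, simpleParityPerm_apply, hcount]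
    simp [add_assoc, cs.inv_simple]

theorem isLiftable_simpleParityPerm : M.IsLiftable (simpleParityPerm cs) := by
  intro i i'
  ext ⟨t, z⟩ : 1
  have hrel : π (alternatingWord i i' (2 * M i i')) = 1 := by
    rw [cs.prod_alternatingWord_eq_mul_pow, if_pos (even_two_mul _), one_mul,
      Nat.mul_div_cancel_left _ two_pos, cs.simple_mul_simple_pow]
  rw [← prod_map_alternatingWord_two_mul, prod_map_simpleParityPerm_apply, hrel]
  simp [count_leftInvSeq_alternatingWord]

def parityPerm : W →* Equiv.Perm (W × ZMod 2) :=
  cs.lift ⟨simpleParityPerm cs, isLiftable_simpleParityPerm cs⟩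

theorem parityPerm_wordProd (ω : List B) :
    parityPerm cs (π ω) = (ω.map (simpleParityPerm cs)).prod := by
  simp [parityPerm, wordProd, map_list_prod, Function.comp_def, lift_apply_simple]

/-- For a reflection `t`, `invParity cs w t = 1` exactly when `t` is a right inversion of `w`. -/
def invParity (w t : W) : ZMod 2 :=
  (parityPerm cs w (t, 0)).2

theorem invParity_wordProd (ω : List B) (t : W) :
    invParity cs (π ω) t = ((lis ω).count (π ω * t * (π ω)⁻¹) : ZMod 2) := by
  simp [invParity, parityPerm_wordProd, prod_map_simpleParityPerm_apply]

theorem parityPerm_apply (w t : W) (z : ZMod 2) :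
    parityPerm cs w (t, z) = (w * t * w⁻¹, z + invParity cs w t) := by
  obtain ⟨ω, rfl⟩ := cs.wordProd_surjective w
  simp [invParity_wordProd, parityPerm_wordProd, prod_map_simpleParityPerm_apply]

theorem invParity_mul (g h t : W) :
    invParity cs (g * h) t = invParity cs h t + invParity cs g (h * t * h⁻¹) := by
  have key : parityPerm cs (g * h) (t, 0) = parityPerm cs g (parityPerm cs h (t, 0)) := by
    rw [map_mul, Equiv.Perm.mul_apply]
  rw [parityPerm_apply, parityPerm_apply, parityPerm_apply, Prod.mk.injEq] at key
  linear_combination key.2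

theorem invParity_one (t : W) : invParity cs 1 t = 0 := by
  simp [invParity]

theorem invParity_simple_self (i : B) : invParity cs (s i) (s i) = 1 := by
  simp [invParity, parityPerm, simpleParityPerm_apply]

theorem invParity_self_of_isReflection {t : W} (ht : cs.IsReflection t) :
    invParity cs t t = 1 := by
  obtain ⟨c, i, rfl⟩ := ht
  have hcancel := invParity_mul cs c c⁻¹ (c * s i * c⁻¹)
  rw [mul_inv_cancel, invParity_one, show c⁻¹ * (c * s i * c⁻¹) * c⁻¹⁻¹ = s i by group]
    at hcancel
  rw [invParity_mul, invParity_mul, show c⁻¹ * (c * s i * c⁻¹) * c⁻¹⁻¹ = s i by group,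
    mul_inv_cancel_right, invParity_simple_self]
  linear_combination -hcancel

theorem invParity_eq_one_of_length_mul_lt {w t : W} (ht : cs.IsReflection t)
    (hlt : ℓ (t * w) < ℓ w) : invParity cs w (w⁻¹ * t * w) = 1 := by
  obtain ⟨ω, hω, hωw⟩ := cs.exists_isReduced (t * w)
  have hnot : t ∉ lis ω := fun hmem => by
    have := (cs.isLeftInversion_of_mem_leftInvSeq hω hmem).2
    rw [← hωw, ← mul_assoc, ht.mul_self, one_mul] at this
    omega
  have hconj : t * w * (w⁻¹ * t * w) * (t * w)⁻¹ = t := by group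
  have hshorter : invParity cs (t * w) (w⁻¹ * t * w) = 0 := by
    rw [hωw, invParity_wordProd, ← hωw, hconj, List.count_eq_zero.mpr hnot, Nat.cast_zero]
  calc invParity cs w (w⁻¹ * t * w)
      = invParity cs (t * (t * w)) (w⁻¹ * t * w) := by rw [← mul_assoc, ht.mul_self, one_mul]
    _ = 1 := by
      rw [invParity_mul, hshorter, hconj, invParity_self_of_isReflection cs ht, zero_add]

end Parity

section Exchange

variable (cs : CoxeterSystem M W)

local prefix:100 "π " => cs.wordProd
local prefix:100 "ℓ " => cs.length
local prefix:100 "lis " => cs.leftInvSeq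
local prefix:100 "ris " => cs.rightInvSeq

theorem mem_leftInvSeq_of_length_mul_lt {ω : List B} {t : W} (ht : cs.IsReflection t)
    (hlt : ℓ (t * π ω) < ℓ (π ω)) : t ∈ lis ω := by
  classical
  have hparity := invParity_eq_one_of_length_mul_lt cs ht hlt
  rw [invParity_wordProd, show π ω * ((π ω)⁻¹ * t * π ω) * (π ω)⁻¹ = t by group] at hparity
  by_contra hnot
  rw [List.count_eq_zero.mpr hnot, Nat.cast_zero] at hparity
  exact zero_ne_one hparity

theorem mem_rightInvSeq_of_length_mul_lt {ω : List B} {t : W} (ht : cs.IsReflection t)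
    (hlt : ℓ (π ω * t) < ℓ (π ω)) : t ∈ ris ω := by
  have hlt' : ℓ (t * π ω.reverse) < ℓ (π ω.reverse) := by
    rwa [wordProd_reverse, ← ht.inv, ← mul_inv_rev, length_inv, length_inv]
  simpa [leftInvSeq_reverse] using mem_leftInvSeq_of_length_mul_lt cs ht hlt'

/-- The strong exchange property. -/
theorem exists_eraseIdx_eq_mul_of_length_mul_lt {ω : List B} {t : W} (ht : cs.IsReflection t)
    (hlt : ℓ (π ω * t) < ℓ (π ω)) : ∃ j < ω.length, π (ω.eraseIdx j) = π ω * t := by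
  obtain ⟨j, hj, hjt⟩ := List.getElem_of_mem (mem_rightInvSeq_of_length_mul_lt cs ht hlt)
  refine ⟨j, by simpa using hj, ?_⟩
  rw [← cs.wordProd_mul_getD_rightInvSeq, List.getD_eq_getElem _ _ hj, hjt]

end Exchange

end CoxeterSystem

namespace CoxeterPaper

open CoxeterSystem List

variable {B : Type*} {W : Type*} [Group W] {M : CoxeterMatrix B}

section Bruhat

variable {cs : CoxeterSystem M W}

local prefix:100 "s " => cs.simple
local prefix:100 "π " => cs.wordProd
local prefix:100 "ℓ " => cs.length

theorem BruhatLE.refl (x : W) : BruhatLE cs x x :=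
  Relation.ReflTransGen.refl

theorem BruhatLE.trans {x y z : W} (hxy : BruhatLE cs x y) (hyz : BruhatLE cs y z) :
    BruhatLE cs x z :=
  Relation.ReflTransGen.trans hxy hyz

theorem BruhatLE.length_le {x y : W} (h : BruhatLE cs x y) : ℓ x ≤ ℓ y := by
  induction h with
  | refl => exact le_rfl
  | tail _ hstep ih => exact ih.trans hstep.2.le

theorem bruhatLE_mul_of_isReflection {x t : W} (ht : cs.IsReflection t)
    (hlt : ℓ x < ℓ (x * t)) : BruhatLE cs x (x * t) :=
  Relation.ReflTransGen.single ⟨⟨t, ht, rfl⟩, hlt⟩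

theorem bruhatLE_mul_simple {x : W} {i : B} (hlt : ℓ x < ℓ (x * s i)) :
    BruhatLE cs x (x * s i) :=
  bruhatLE_mul_of_isReflection (cs.isReflection_simple i) hlt

theorem mul_simple_bruhatLE {x : W} {i : B} (hlt : ℓ (x * s i) < ℓ x) :
    BruhatLE cs (x * s i) x := by
  simpa using bruhatLE_mul_simple (cs := cs) (x := x * s i) (i := i) (by simpa using hlt)

theorem BruhatLE.inv {x y : W} (h : BruhatLE cs x y) : BruhatLE cs x⁻¹ y⁻¹ := by
  induction h with
  | refl => exact BruhatLE.refl _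
  | @tail y z _ hstep ih =>
    obtain ⟨⟨t, ht, rfl⟩, hlt⟩ := hstep
    have hconj : y⁻¹ * (y * t * y⁻¹) = (y * t)⁻¹ := by rw [mul_inv_rev, ht.inv]; group
    refine ih.trans ?_
    rw [← hconj]
    exact bruhatLE_mul_of_isReflection (ht.conj y) (by rwa [hconj, length_inv, length_inv])

theorem BruhatLE.exists_sublist {x : W} {ω : List B} (h : BruhatLE cs x (π ω)) :
    ∃ v, v <+ ω ∧ π v = x := by
  generalize hy : π ω = y at h
  induction h generalizing ω with
  | refl => exact ⟨ω, List.Sublist.refl ω, hy⟩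
  | @tail y z _ hstep ih =>
    obtain ⟨⟨t, ht, rfl⟩, hlt⟩ := hstep
    have hyt : π ω * t = y := by rw [hy, mul_assoc, ht.mul_self, mul_one]
    obtain ⟨j, -, hj⟩ := cs.exists_eraseIdx_eq_mul_of_length_mul_lt ht (by rwa [hyt, hy])
    obtain ⟨v, hv, rfl⟩ := ih (hj.trans hyt)
    exact ⟨v, hv.trans (List.eraseIdx_sublist ω j), rfl⟩

/-- The lengths force `ℓ (w * s i) + 1 = ℓ w = ℓ (z * s i)` for `w = z * t`; exchanging `t`
out of a reduced word for `w` ending in `i`, deleting any letter but the last one would make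
`z * s i` too short. -/
theorem mul_simple_eq_of_length_mul_lt {z t : W} {i : B} (ht : cs.IsReflection t)
    (hzt : ℓ z < ℓ (z * t)) (hlt : ℓ (z * t * s i) < ℓ (z * s i)) : z * s i = z * t := by
  set w := z * t with hw
  have hwz : w * t = z := by rw [hw, mul_assoc, ht.mul_self, mul_one]
  have hws : ℓ (w * s i) + 1 = ℓ w := by
    have := cs.length_mul_simple w i; have := cs.length_mul_simple z i; omega
  have hzs : ℓ (z * s i) = ℓ w := by
    have := cs.length_mul_simple z i; omega
  obtain ⟨ω, hω, hωw⟩ := cs.exists_isReduced (w * s i)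
  have hω' : π (ω ++ [i]) = w := by simp [cs.wordProd_append, ← hωw]
  obtain ⟨j, hj, hjz⟩ := cs.exists_eraseIdx_eq_mul_of_length_mul_lt (ω := ω ++ [i]) ht
    (by rw [hω', hwz]; omega)
  rw [hω', hwz] at hjz
  rcases lt_or_ge j ω.length with hjω | hjω
  · rw [List.eraseIdx_append_of_lt_length hjω, cs.wordProd_append, cs.wordProd_singleton] at hjz
    have hshort := cs.length_wordProd_le (ω.eraseIdx j)
    rw [show π (ω.eraseIdx j) = z * s i by rw [← hjz, cs.simple_mul_simple_cancel_right],
      List.length_eraseIdx_of_lt hjω] at hshort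
    have : ℓ (w * s i) = ω.length := by rw [hωw, hω]
    omega
  · have hjlast : j = ω.length := by
      rw [length_append, length_singleton] at hj
      omega
    rw [hjlast, eraseIdx_append_of_length_le le_rfl, Nat.sub_self, eraseIdx_zero, tail_cons,
      append_nil] at hjz
    rw [← hjz, ← hωw, cs.simple_mul_simple_cancel_right]

theorem mul_simple_bruhatLE_or {z t : W} (ht : cs.IsReflection t) (hzt : ℓ z < ℓ (z * t))
    (i : B) : BruhatLE cs (z * s i) (z * t) ∨ BruhatLE cs (z * s i) (z * t * s i) := by
  have hconj : z * s i * (s i * t * s i) = z * t * s i := by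
    simp [mul_assoc, cs.simple_mul_simple_cancel_left]
  rcases (ht.conj (s i)).length_mul_left_ne (z * s i) |>.lt_or_gt with hlt | hlt
  · rw [cs.inv_simple, hconj] at hlt
    exact .inl (mul_simple_eq_of_length_mul_lt ht hzt hlt ▸ BruhatLE.refl _)
  · rw [cs.inv_simple, hconj] at hlt
    refine .inr (hconj ▸ bruhatLE_mul_of_isReflection ?_ (hconj ▸ hlt))
    simpa [cs.inv_simple] using ht.conj (s i)

theorem BruhatLE.mul_simple_le {x w w' : W} {i : B} (hx : BruhatLE cs x w)
    (hw : BruhatLE cs w w') (hws : BruhatLE cs (w * s i) w') : BruhatLE cs (x * s i) w' := by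
  induction hx using Relation.ReflTransGen.head_induction_on with
  | refl => exact hws
  | head hstep hyw ih =>
    obtain ⟨⟨t, ht, rfl⟩, hlt⟩ := hstep
    rcases mul_simple_bruhatLE_or ht hlt i with h | h
    · exact h.trans (hyw.trans hw)
    · exact h.trans ih

end Bruhat

section Demazure

variable {cs : CoxeterSystem M W}

local prefix:100 "s " => cs.simple
local prefix:100 "π " => cs.wordProd
local prefix:100 "ℓ " => cs.length

theorem le_demStep (x : W) (i : B) : BruhatLE cs x (demStep cs x i) := by
  unfold demStep
  split_ifs with h
  · exact bruhatLE_mul_simple h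
  · exact BruhatLE.refl x

theorem mul_simple_le_demStep (x : W) (i : B) : BruhatLE cs (x * s i) (demStep cs x i) := by
  unfold demStep
  split_ifs with h
  · exact BruhatLE.refl _
  · exact mul_simple_bruhatLE (lt_of_le_of_ne (not_lt.mp h) (cs.length_mul_simple_ne x i))

theorem demWord_append_singleton (x : W) (l : List B) (i : B) :
    demWord cs x (l ++ [i]) = demStep cs (demWord cs x l) i := by
  simp [demWord, List.foldl_append]

theorem BruhatLE.mul_wordProd_le_demWord {u x : W} (h : BruhatLE cs u x) {v l : List B}
    (hv : v <+ l) : BruhatLE cs (u * π v) (demWord cs x l) := by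
  induction l using List.reverseRecOn generalizing v with
  | nil => simpa [List.sublist_nil.mp hv, demWord] using h
  | append_singleton l i ih =>
    rw [demWord_append_singleton]
    obtain ⟨v₁, v₂, rfl, hv₁, hv₂⟩ := List.sublist_append_iff.mp hv
    rcases List.sublist_singleton.mp hv₂ with rfl | rfl
    · simpa using (ih hv₁).trans (le_demStep _ i)
    · rw [cs.wordProd_append, cs.wordProd_singleton, ← mul_assoc]
      exact (ih hv₁).mul_simple_le (le_demStep _ i) (mul_simple_le_demStep _ i)

theorem le_dem {u v x y : W} (hu : BruhatLE cs u x) (hv : BruhatLE cs v y) :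
    BruhatLE cs (u * v) (dem cs x y) := by
  have hword := (Classical.choose_spec (cs.exists_isReduced y)).2
  rw [hword] at hv
  obtain ⟨v', hv', rfl⟩ := hv.exists_sublist
  exact hu.mul_wordProd_le_demWord hv'

theorem le_dem_left (x y : W) : BruhatLE cs x (dem cs x y) := by
  unfold dem
  simpa using (BruhatLE.refl x).mul_wordProd_le_demWord (cs := cs) (List.nil_sublist _)

theorem demWord_one_eq_wordProd {ω : List B} (hω : cs.IsReduced ω) :
    demWord cs 1 ω = π ω := by
  induction ω using List.reverseRecOn with
  | nil => rfl
  | append_singleton l i ih =>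
    have hlen : ℓ (π l * s i) = l.length + 1 := by
      simpa [CoxeterSystem.IsReduced, cs.wordProd_append] using hω
    have hl : ℓ (π l) = l.length := by
      have := cs.length_wordProd_le l; have := cs.length_mul_simple (π l) i; omega
    rw [demWord_append_singleton, ih hl, demStep, if_pos (by omega), cs.wordProd_append,
      cs.wordProd_singleton]

/-- The subword property. -/
theorem wordProd_le_of_sublist {v ω : List B} (hω : cs.IsReduced ω) (hv : v <+ ω) :
    BruhatLE cs (π v) (π ω) := by
  simpa [demWord_one_eq_wordProd hω] using (BruhatLE.refl (cs := cs) 1).mul_wordProd_le_demWord hv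

/-- The lifting property. -/
theorem BruhatLE.le_mul_simple_of_length_lt {u w : W} {i : B} (h : BruhatLE cs u w)
    (hw : ℓ (w * s i) < ℓ w) (hu : ℓ u < ℓ (u * s i)) : BruhatLE cs u (w * s i) := by
  obtain ⟨ω, hω, hωw⟩ := cs.exists_isReduced (w * s i)
  have hred : cs.IsReduced (ω ++ [i]) := by
    simp only [CoxeterSystem.IsReduced, cs.wordProd_append, ← hωw, cs.wordProd_singleton,
      cs.simple_mul_simple_cancel_right, List.length_append, List.length_singleton, ← hω.eq]
    have := cs.length_mul_simple w i
    omega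
  rw [show w = π (ω ++ [i]) by simp [cs.wordProd_append, ← hωw]] at h
  obtain ⟨v, hv, rfl⟩ := h.exists_sublist
  obtain ⟨v₁, v₂, rfl, hv₁, hv₂⟩ := List.sublist_append_iff.mp hv
  rw [hωw]
  rcases List.sublist_singleton.mp hv₂ with rfl | rfl
  · simpa using wordProd_le_of_sublist hω hv₁
  · rw [cs.wordProd_append, cs.wordProd_singleton] at hu ⊢
    rw [cs.simple_mul_simple_cancel_right] at hu
    exact (mul_simple_bruhatLE hu).trans (wordProd_le_of_sublist hω hv₁)

theorem BruhatLE.le_mul_simple {u w : W} {i : B} (h : BruhatLE cs u w)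
    (hu : ℓ u < ℓ (u * s i)) : BruhatLE cs u (w * s i) := by
  rcases (cs.length_mul_simple_ne w i).lt_or_gt with hw | hw
  · exact h.le_mul_simple_of_length_lt hw hu
  · exact h.trans (bruhatLE_mul_simple hw)

theorem BruhatLE.le_simple_mul {u w : W} {i : B} (h : BruhatLE cs u w)
    (hu : ℓ u < ℓ (s i * u)) : BruhatLE cs u (s i * w) := by
  have hu' : ℓ u⁻¹ < ℓ (u⁻¹ * s i) := by
    rwa [← cs.inv_simple, ← mul_inv_rev, length_inv, length_inv]
  simpa [cs.inv_simple] using (h.inv.le_mul_simple hu').inv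

end Demazure

section DoubleCosets

variable {cs : CoxeterSystem M W}

local prefix:100 "s " => cs.simple
local prefix:100 "ℓ " => cs.length

theorem simple_mem_parabolic {I : Set B} {i : B} (hi : i ∈ I) : s i ∈ parabolic cs I :=
  Subgroup.subset_closure ⟨i, hi, rfl⟩

/-- Since simple reflections are involutions, no inverse case is needed. -/
theorem parabolic_induction {I : Set B} {p : (x : W) → x ∈ parabolic cs I → Prop}
    (simple : ∀ i (hi : i ∈ I), p (s i) (simple_mem_parabolic hi)) (one : p 1 (one_mem _))
    (mul : ∀ x y hx hy, p x hx → p y hy → p (x * y) (mul_mem hx hy)) {x : W}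
    (hx : x ∈ parabolic cs I) : p x hx :=
  Subgroup.closure_induction'' (by rintro _ ⟨i, hi, rfl⟩; exact simple i hi)
    (by rintro _ ⟨i, hi, rfl⟩; simpa only [cs.inv_simple] using simple i hi) one mul hx

theorem mem_doset_self (I J : Set B) (w : W) : w ∈ doset cs I J w :=
  ⟨1, one_mem _, 1, one_mem _, by simp⟩

theorem mul_mem_doset {I J : Set B} {w x a b : W} (ha : a ∈ parabolic cs I)
    (hb : b ∈ parabolic cs J) (hx : x ∈ doset cs I J w) : a * x * b ∈ doset cs I J w := by
  obtain ⟨a', ha', b', hb', rfl⟩ := hx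
  exact ⟨a * a', mul_mem ha ha', b' * b, mul_mem hb' hb, by group⟩

theorem doset_eq_of_mem {I J : Set B} {w z : W} (hz : z ∈ doset cs I J w) :
    doset cs I J z = doset cs I J w := by
  obtain ⟨a, ha, b, hb, rfl⟩ := hz
  ext x
  refine ⟨fun ⟨a', ha', b', hb', hx⟩ => ?_, fun ⟨a', ha', b', hb', hx⟩ => ?_⟩
  · exact hx ▸ ⟨a' * a, mul_mem ha' ha, b * b', mul_mem hb hb', by group⟩
  · exact hx ▸ ⟨a' * a⁻¹, mul_mem ha' (inv_mem ha), b⁻¹ * b', mul_mem (inv_mem hb) hb',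
      by group⟩

theorem IsMinOf.length_lt_simple_mul {I J : Set B} {w m : W}
    (hm : IsMinOf cs (doset cs I J w) m) {i : B} (hi : i ∈ I) : ℓ m < ℓ (s i * m) := by
  have hmem : s i * m ∈ doset cs I J w := by
    simpa using mul_mem_doset (simple_mem_parabolic hi) (one_mem _) hm.1
  exact lt_of_le_of_ne (hm.2 _ hmem).length_le (cs.length_simple_mul_ne m i).symm

theorem IsMinOf.length_lt_mul_simple {I J : Set B} {w m : W}
    (hm : IsMinOf cs (doset cs I J w) m) {j : B} (hj : j ∈ J) : ℓ m < ℓ (m * s j) := by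
  have hmem : m * s j ∈ doset cs I J w := by
    simpa using mul_mem_doset (one_mem _) (simple_mem_parabolic hj) hm.1
  exact lt_of_le_of_ne (hm.2 _ hmem).length_le (cs.length_mul_simple_ne m j).symm

theorem BruhatLE.le_mul_right_of_mem_parabolic {J : Set B} {m z b : W} (h : BruhatLE cs m z)
    (hJ : ∀ j ∈ J, ℓ m < ℓ (m * s j)) (hb : b ∈ parabolic cs J) : BruhatLE cs m (z * b) := by
  induction hb using parabolic_induction generalizing z with
  | simple j hj => exact h.le_mul_simple (hJ j hj)
  | one => simpa using h
  | mul x y _ _ hx hy => simpa only [mul_assoc] using hy (hx h)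

theorem BruhatLE.le_mul_left_of_mem_parabolic {I : Set B} {m z a : W} (h : BruhatLE cs m z)
    (hI : ∀ i ∈ I, ℓ m < ℓ (s i * m)) (ha : a ∈ parabolic cs I) : BruhatLE cs m (a * z) := by
  induction ha using parabolic_induction generalizing z with
  | simple i hi => exact h.le_simple_mul (hI i hi)
  | one => simpa using h
  | mul x y _ _ hx hy => simpa only [mul_assoc] using hx (hy h)

theorem BruhatLE.le_of_mem_doset {I J : Set B} {m y x : W} (h : BruhatLE cs m y)
    (hI : ∀ i ∈ I, ℓ m < ℓ (s i * m)) (hJ : ∀ j ∈ J, ℓ m < ℓ (m * s j))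
    (hx : x ∈ doset cs I J y) : BruhatLE cs m x := by
  obtain ⟨a, ha, b, hb, rfl⟩ := hx
  simpa only [mul_assoc] using
    (h.le_mul_right_of_mem_parabolic hJ hb).le_mul_left_of_mem_parabolic hI ha

end DoubleCosets

section Paths

variable {cs : CoxeterSystem M W}

theorem exprMax_succ (wI : ℕ → W) (k : ℕ) :
    exprMax cs wI (k + 1) = dem cs (exprMax cs wI k) (wI (k + 1)) := by
  simp [exprMax, List.range_succ, List.foldl_append]

theorem exists_mul_of_doset_subset {I J J' : Set B} {P Q : Set W} (hP : IsDCoset cs I J P)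
    (hQ : IsDCoset cs I J' Q) (hPQ : P ⊆ Q) {x : W} (hx : x ∈ Q) :
    ∃ y ∈ P, ∃ b ∈ parabolic cs J', x = y * b := by
  obtain ⟨w, rfl⟩ := hP
  obtain ⟨w', rfl⟩ := hQ
  rw [← doset_eq_of_mem (hPQ (mem_doset_self I J w))] at hx
  obtain ⟨a, ha, b, hb, rfl⟩ := hx
  exact ⟨a * w, by simpa using mul_mem_doset ha (one_mem _) (mem_doset_self I J w), b, hb, rfl⟩

theorem le_exprMax_of_mem_path {I : ℕ → Set B} {d : ℕ} {wI : ℕ → W} {p : ℕ → Set W}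
    (hss : IsSinglestep I d) (hwI : ∀ i ≤ d, IsMaxOf cs (parabolic cs (I i) : Set W) (wI i))
    (hp : IsSubPath cs I d p) : ∀ k ≤ d, ∀ x ∈ p k, BruhatLE cs x (exprMax cs wI k) := by
  intro k
  induction k with
  | zero =>
    rintro - x hx
    rw [hp.1] at hx
    obtain ⟨a, ha, b, hb, rfl⟩ := hx
    exact (hwI 0 (Nat.zero_le d)).2 _ (by simpa using mul_mem ha hb)
  | succ k ih =>
    intro hk x hx
    rw [exprMax_succ]
    rcases hss k hk with ⟨i, -, hup⟩ | ⟨i, -, hdown⟩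
    · obtain ⟨y, hy, b, hb, rfl⟩ := exists_mul_of_doset_subset (hp.2.1 k (by omega))
        (hp.2.1 (k + 1) hk) ((hp.2.2 k hk).1 (hup ▸ Set.subset_insert i _)) hx
      exact le_dem (ih (by omega) y hy) ((hwI (k + 1) hk).2 b hb)
    · exact (ih (by omega) x ((hp.2.2 k hk).2 (hdown ▸ Set.sdiff_subset) hx)).trans
        (le_dem_left _ _)

end Paths

theorem terminus_le_general (cs : CoxeterSystem M W) (I : ℕ → Set B) (d : ℕ)
    (hss : IsSinglestep I d)
    (wI : ℕ → W) (hwI : ∀ i ≤ d, IsMaxOf cs (parabolic cs (I i) : Set W) (wI i))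
    (P : Set W) (hP : IsDCoset cs (I 0) (I d) P) (MP : W)
    (hMP : IsMaxOf cs P MP) (hexpr : MP = exprMax cs wI d)
    (p : ℕ → Set W) (hp : IsSubPath cs I d p)
    (mt mP : W) (hmt : IsMinOf cs (p d) mt) (hmP : IsMinOf cs P mP) :
    BruhatLE cs mt mP := by
  have hmt_le : BruhatLE cs mt MP := by
    rw [hexpr]
    exact le_exprMax_of_mem_path hss hwI hp d le_rfl mt hmt.1
  obtain ⟨w, hw⟩ := hp.2.1 d le_rfl
  obtain ⟨v, rfl⟩ := hP
  rw [hw] at hmt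
  rw [← doset_eq_of_mem hMP.1] at hmP
  exact hmt_le.le_of_mem_doset (fun i hi => hmt.length_lt_simple_mul hi)
    (fun j hj => hmt.length_lt_mul_simple hj) hmP.1

/-- The terminus of any path subordinate to a singlestep expression for a coset
`p` is `≤ p` in the Bruhat order on double cosets. -/
theorem terminus_le (cs : CoxeterSystem M W) (I : ℕ → Set B) (d : ℕ)
    (hss : IsSinglestep I d) (hfin : ∀ i ≤ d, Finitary cs (I i))
    (wI : ℕ → W) (hwI : ∀ i ≤ d, IsMaxOf cs (parabolic cs (I i) : Set W) (wI i))
    (P : Set W) (hP : IsDCoset cs (I 0) (I d) P) (MP : W)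
    (hMP : IsMaxOf cs P MP) (hexpr : MP = exprMax cs wI d)
    (p : ℕ → Set W) (hp : IsSubPath cs I d p)
    (mt mP : W) (hmt : IsMinOf cs (p d) mt) (hmP : IsMinOf cs P mP) :
    BruhatLE cs mt mP :=
  terminus_le_general cs I d hss wI hwI P hP MP hMP hexpr p hp mt mP hmt hmP

end CoxeterPaper
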